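/- Let X be a uniform space and let S be a uniformly d-discrete collection of nonempty subsets of X for some uniformly continuous pseudometric d. Then for every subcollection S' ⊆ S, the union ⋃S' is open in the d-topology, and hence measurable in the σ-algebra generated by the cozero sets of X. Consequently, for any finite countably additive measure m on σ(Coz(X)), the map assigning to each subcollection S' ⊆ S the value m(⋃S') is a countably additive measure on the power set of S. -/

import Mathlib

open Filter MeasureTheory Topology Set

/-- `d` is a pseudometric on `X`. -/
def IsPseudometric {X : Type*} (d : X → X → ℝ) : Prop :=
  (∀ x, d x x = 0) ∧ (∀ x y, d x y = d y x) ∧ (∀ x y, 0 ≤ d x y) ∧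
    ∀ x y z, d x z ≤ d x y + d y z

/-- `Lip d`: functions bounded by 1 that are 1-Lipschitz for `d`. -/
def Lip {X : Type*} (d : X → X → ℝ) : Set (X → ℝ) :=
  {f | (∀ x, |f x| ≤ 1) ∧ ∀ x x', |f x - f x'| ≤ d x x'}

/-- `U` is open in the (possibly non-Hausdorff) topology induced by the pseudometric `d`. -/
def DOpen {X : Type*} (d : X → X → ℝ) (U : Set X) : Prop :=
  ∀ x ∈ U, ∃ ε > 0, ∀ y, d x y < ε → y ∈ U

/-- `U` is a cozero set of a bounded uniformly continuous real function on `X`. -/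
def IsCozero (X : Type*) [UniformSpace X] (U : Set X) : Prop :=
  ∃ f : X → ℝ, UniformContinuous f ∧ (∃ C, ∀ x, |f x| ≤ C) ∧ U = {x | f x ≠ 0}

/-- The σ-algebra generated by the cozero sets of `X`. -/
def cozMS (X : Type*) [UniformSpace X] : MeasurableSpace X :=
  MeasurableSpace.generateFrom {U | IsCozero X U}

/-- The pseudometric topology of `d` is separable. -/
def DSeparable {X : Type*} (d : X → X → ℝ) : Prop :=
  ∃ D : Set X, D.Countable ∧ ∀ x : X, ∀ ε : ℝ, 0 < ε → ∃ p ∈ D, d x p < ε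

/-- The cardinality of `A` has measure zero: every finite nonnegative countably additive
measure on the power set of `A` vanishing on singletons is zero. -/
def HasMeasureZero (A : Type*) : Prop :=
  ∀ m : @MeasureTheory.Measure A ⊤, @MeasureTheory.IsFiniteMeasure A ⊤ m →
    (∀ a : A, m {a} = 0) → m Set.univ = 0

/-- `Y` is a uniformly discrete subset of the uniform space `X`. -/
def UniformlyDiscrete {X : Type*} [UniformSpace X] (Y : Set X) : Prop :=
  ∃ d : X → X → ℝ, IsPseudometric d ∧ (UniformContinuous fun p : X × X => d p.1 p.2) ∧
    ∃ ε > 0, ∀ y ∈ Y, ∀ y' ∈ Y, y ≠ y' → ε ≤ d y y'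

/-- `X` is a uniform D-space. -/
def IsDSpace (X : Type*) [UniformSpace X] : Prop :=
  ∀ Y : Set X, UniformlyDiscrete Y → HasMeasureZero Y

/-- Distance from a point to a set. -/
noncomputable def distSet {X : Type*} (d : X → X → ℝ) (S : Set X) (x : X) : ℝ :=
  sInf ((d x) '' S)

/-- `fS d S x = min 1 (d(x,S))`, with the convention `fS d ∅ = 1`. -/
noncomputable def fS {X : Type*} (d : X → X → ℝ) (S : Set X) (x : X) : ℝ :=
  @ite _ S.Nonempty (Classical.propDecidable _) (min 1 (distSet d S x)) 1

/-!
Distinct members of `S` are at `d`-distance at least `δ > 0`, in particular disjoint. A union of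
`d`-open sets is `d`-open, and a `d`-open set `U` is the cozero set of `x ↦ min 1 (d(x, Uᶜ))`,
which is bounded and `1`-Lipschitz for `d`, hence uniformly continuous. So every union of a
subfamily of `S` lies in `σ(Coz X)`, and subfamilies that are disjoint as families have disjoint
unions, which gives countable additivity of `S' ↦ m(⋃₀ S')`.
-/

open scoped Uniformity

namespace IsPseudometric

variable {X : Type*} {d : X → X → ℝ}

lemma dist_self (hd : IsPseudometric d) (x : X) : d x x = 0 := hd.1 x

lemma symm (hd : IsPseudometric d) (x y : X) : d x y = d y x := hd.2.1 x y

lemma nonneg (hd : IsPseudometric d) (x y : X) : 0 ≤ d x y := hd.2.2.1 x y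

lemma triangle (hd : IsPseudometric d) (x y z : X) : d x z ≤ d x y + d y z := hd.2.2.2 x y z

lemma distSet_nonneg (hd : IsPseudometric d) (A : Set X) (x : X) : 0 ≤ distSet d A x :=
  Real.sInf_nonneg <| by rintro _ ⟨a, -, rfl⟩; exact hd.nonneg x a

lemma distSet_le (hd : IsPseudometric d) {A : Set X} {a : X} (ha : a ∈ A) (x : X) :
    distSet d A x ≤ d x a :=
  csInf_le ⟨0, by rintro _ ⟨b, -, rfl⟩; exact hd.nonneg x b⟩ ⟨a, ha, rfl⟩

lemma distSet_le_add (hd : IsPseudometric d) {A : Set X} (hA : A.Nonempty) (x y : X) :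
    distSet d A x ≤ d x y + distSet d A y := by
  have : distSet d A x - d x y ≤ distSet d A y :=
    le_csInf (hA.image _) <| by
      rintro _ ⟨a, ha, rfl⟩
      linarith [hd.distSet_le ha x, hd.triangle x y a]
  linarith

lemma abs_fS_sub_le (hd : IsPseudometric d) (A : Set X) (x y : X) :
    |fS d A x - fS d A y| ≤ d x y := by
  by_cases hA : A.Nonempty
  · simp only [fS, hA, if_true]
    calc |min 1 (distSet d A x) - min 1 (distSet d A y)|
        ≤ |distSet d A x - distSet d A y| := by
          simpa using abs_min_sub_min_le_max 1 (distSet d A x) 1 (distSet d A y)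
      _ ≤ d x y := abs_sub_le_iff.2
          ⟨by linarith [hd.distSet_le_add hA x y],
            by linarith [hd.distSet_le_add hA y x, hd.symm y x]⟩
  · simpa [fS, hA] using hd.nonneg x y

lemma abs_fS_le_one (hd : IsPseudometric d) (A : Set X) (x : X) : |fS d A x| ≤ 1 := by
  by_cases hA : A.Nonempty
  · simp only [fS, hA, if_true]
    rw [abs_of_nonneg (le_min zero_le_one (hd.distSet_nonneg A x))]
    exact min_le_left _ _
  · simp [fS, hA]

lemma fS_compl_ne_zero_iff (hd : IsPseudometric d) {U : Set X} (hU : DOpen d U) (x : X) :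
    fS d Uᶜ x ≠ 0 ↔ x ∈ U := by
  constructor
  · intro hfx
    by_contra hx
    replace hx : x ∈ Uᶜ := hx
    have hzero : distSet d Uᶜ x = 0 :=
      le_antisymm (by simpa [hd.dist_self] using hd.distSet_le hx x) (hd.distSet_nonneg _ x)
    simp [fS, Set.nonempty_of_mem hx, hzero] at hfx
  · intro hx
    obtain ⟨ε, hε, hball⟩ := hU x hx
    by_cases hUc : (Uᶜ).Nonempty
    · have hε_le : ε ≤ distSet d Uᶜ x :=
        le_csInf (hUc.image _) <| by
          rintro _ ⟨a, ha, rfl⟩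
          exact not_lt.1 fun h => ha (hball a h)
      simp only [fS, hUc, if_true]
      exact (lt_min one_pos (hε.trans_le hε_le)).ne'
    · simp [fS, hUc]

lemma pairwiseDisjoint_of_le_dist (hd : IsPseudometric d) {S : Set (Set X)} {δ : ℝ} (hδ : 0 < δ)
    (hS : ∀ V ∈ S, ∀ V' ∈ S, V ≠ V' → ∀ x ∈ V, ∀ x' ∈ V', δ ≤ d x x') :
    S.PairwiseDisjoint id := by
  intro V hV V' hV' hne
  refine Set.disjoint_left.2 fun x hx hx' => ?_
  have := hS V hV V' hV' hne x hx x hx'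
  linarith [hd.dist_self x]

variable [UniformSpace X]

lemma eventually_uniformity_lt (hd : IsPseudometric d)
    (hdu : UniformContinuous fun p : X × X => d p.1 p.2) {ε : ℝ} (hε : 0 < ε) :
    ∀ᶠ p in 𝓤 X, d p.1 p.2 < ε := by
  obtain ⟨u, hu, hsmall⟩ :=
    mem_uniformity_of_uniformContinuous_invariant hdu (Metric.dist_mem_uniformity hε)
  filter_upwards [hu] with p hp
  -- compare `d p.1 p.2` with `d p.2 p.2 = 0`
  simpa [Real.dist_eq, hd.dist_self, abs_of_nonneg (hd.nonneg _ _)] using hsmall _ _ p.2 hp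

lemma uniformContinuous_of_abs_sub_le (hd : IsPseudometric d)
    (hdu : UniformContinuous fun p : X × X => d p.1 p.2) {f : X → ℝ}
    (hf : ∀ x y, |f x - f y| ≤ d x y) : UniformContinuous f := by
  rw [UniformContinuous, Metric.uniformity_basis_dist.tendsto_right_iff]
  intro ε hε
  filter_upwards [hd.eventually_uniformity_lt hdu hε] with p hp
  exact (hf p.1 p.2).trans_lt hp

lemma isCozero_of_dOpen (hd : IsPseudometric d)
    (hdu : UniformContinuous fun p : X × X => d p.1 p.2) {U : Set X} (hU : DOpen d U) :
    IsCozero X U :=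
  ⟨fS d Uᶜ, hd.uniformContinuous_of_abs_sub_le hdu (hd.abs_fS_sub_le Uᶜ),
    ⟨1, hd.abs_fS_le_one Uᶜ⟩, by ext x; exact (hd.fS_compl_ne_zero_iff hU x).symm⟩

end IsPseudometric

lemma DOpen.sUnion {X : Type*} {d : X → X → ℝ} {S : Set (Set X)} (hS : ∀ V ∈ S, DOpen d V) :
    DOpen d (⋃₀ S) := by
  rintro x ⟨V, hV, hx⟩
  obtain ⟨ε, hε, hball⟩ := hS V hV x hx
  exact ⟨ε, hε, fun y hy => ⟨V, hV, hball y hy⟩⟩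

lemma Set.PairwiseDisjoint.disjoint_sUnion_of_disjoint {α : Type*} {S A B : Set (Set α)}
    (hS : S.PairwiseDisjoint id) (hA : A ⊆ S) (hB : B ⊆ S) (hAB : Disjoint A B) :
    Disjoint (⋃₀ A) (⋃₀ B) :=
  Set.disjoint_sUnion_left.2 fun _ ha => Set.disjoint_sUnion_right.2 fun _ hb =>
    hS (hA ha) (hB hb) fun h => Set.disjoint_left.1 hAB ha (h ▸ hb)

lemma MeasureTheory.measure_sUnion_iUnion {α : Type*} [MeasurableSpace α] (μ : Measure α)
    {S : Set (Set α)} (hS : S.PairwiseDisjoint id)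
    (hmeas : ∀ S' ⊆ S, MeasurableSet (⋃₀ S')) {F : ℕ → Set (Set α)} (hF : ∀ n, F n ⊆ S)
    (hFd : Pairwise fun n k => Disjoint (F n) (F k)) :
    μ (⋃₀ ⋃ n, F n) = ∑' n, μ (⋃₀ F n) := by
  rw [Set.sUnion_iUnion]
  exact measure_iUnion (fun n k hnk => hS.disjoint_sUnion_of_disjoint (hF n) (hF k) (hFd hnk))
    fun n => hmeas (F n) (hF n)

theorem discrete_family_measurable_general {X : Type u} [UniformSpace X] (d : X → X → ℝ)
    (hd : IsPseudometric d) (hdu : UniformContinuous fun p : X × X => d p.1 p.2)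
    (S : Set (Set X)) (hopen : ∀ V ∈ S, DOpen d V)
    (hdisc : ∃ δ > 0, ∀ V ∈ S, ∀ V' ∈ S, V ≠ V' → ∀ x ∈ V, ∀ x' ∈ V', δ ≤ d x x') :
    (∀ S' ⊆ S, DOpen d (⋃₀ S')) ∧
    (∀ S' ⊆ S, MeasurableSet[cozMS X] (⋃₀ S')) ∧
    (∀ m : @MeasureTheory.Measure X (cozMS X),
      @MeasureTheory.IsFiniteMeasure X (cozMS X) m →
      ∀ F : ℕ → Set (Set X), (∀ n, F n ⊆ S) →
        (Pairwise fun n k => Disjoint (F n) (F k)) →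
        m (⋃₀ ⋃ n, F n) = ∑' n, m (⋃₀ F n)) := by
  obtain ⟨δ, hδ, hsep⟩ := hdisc
  have hDOpen : ∀ S' ⊆ S, DOpen d (⋃₀ S') := fun S' hS' =>
    DOpen.sUnion fun V hV => hopen V (hS' hV)
  have hmeas : ∀ S' ⊆ S, MeasurableSet[cozMS X] (⋃₀ S') := fun S' hS' =>
    MeasurableSpace.measurableSet_generateFrom (hd.isCozero_of_dOpen hdu (hDOpen S' hS'))
  refine ⟨hDOpen, hmeas, fun m _ F hF hFd => ?_⟩
  let _ : MeasurableSpace X := cozMS X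
  exact measure_sUnion_iUnion m (hd.pairwiseDisjoint_of_le_dist hδ hsep) hmeas hF hFd

/-- unions of subcollections of a uniformly `d`-discrete collection of
nonempty `d`-open sets are `d`-open, hence measurable for `σ(Coz X)`; and
`S' ↦ m(⋃ S')` is countably additive on the power set of the collection. -/
theorem discrete_family_measurable {X : Type u} [UniformSpace X] (d : X → X → ℝ)
    (hd : IsPseudometric d) (hdu : UniformContinuous fun p : X × X => d p.1 p.2)
    (S : Set (Set X)) (hne : ∀ V ∈ S, V.Nonempty) (hopen : ∀ V ∈ S, DOpen d V)
    (hdisc : ∃ δ > 0, ∀ V ∈ S, ∀ V' ∈ S, V ≠ V' → ∀ x ∈ V, ∀ x' ∈ V', δ ≤ d x x') :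
    (∀ S' ⊆ S, DOpen d (⋃₀ S')) ∧
    (∀ S' ⊆ S, MeasurableSet[cozMS X] (⋃₀ S')) ∧
    (∀ m : @MeasureTheory.Measure X (cozMS X),
      @MeasureTheory.IsFiniteMeasure X (cozMS X) m →
      ∀ F : ℕ → Set (Set X), (∀ n, F n ⊆ S) →
        (Pairwise fun n k => Disjoint (F n) (F k)) →
        m (⋃₀ ⋃ n, F n) = ∑' n, m (⋃₀ F n)) :=
  discrete_family_measurable_general d hd hdu S hopen hdisc
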